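/- Let 1/2 < η < 1 and let Ṽ_η be the normalised Wolbachia operator. For every initial point s = (x₁⁽⁰⁾,x₂⁽⁰⁾,x₃⁽⁰⁾,u⁽⁰⁾) ∈ S^{3,1}, the sequence Ṽ_η^k(s) converges as k → ∞, with limit (0, 1/2, 0, 1/2) if x₁⁽⁰⁾ = x₃⁽⁰⁾ = 0, and limit (η, 0, 0, 1−η) otherwise. -/

import Mathlib

/-- The normalised Wolbachia gonosomal operator with parameter `η`
(defined for points whose first three coordinates have positive sum). -/
noncomputable def nWolbOp (η : ℝ) (p : ℝ × ℝ × ℝ × ℝ) : ℝ × ℝ × ℝ × ℝ :=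
  (η * (2 * p.1 + p.2.2.1) / (2 * (p.1 + p.2.1 + p.2.2.1)),
   (p.2.1 + (1 - η) * p.2.2.1) / (2 * (p.1 + p.2.1 + p.2.2.1)),
   η * p.2.2.1 / (2 * (p.1 + p.2.1 + p.2.2.1)),
   ((1 - η) * (2 * p.1 + p.2.2.1) + p.2.1) / (2 * (p.1 + p.2.1 + p.2.2.1)))

/-- The set `S^{3,1}` of frequency distributions. -/
def S31 : Set (ℝ × ℝ × ℝ × ℝ) :=
  {p | 0 ≤ p.1 ∧ 0 ≤ p.2.1 ∧ 0 ≤ p.2.2.1 ∧ 0 ≤ p.2.2.2 ∧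
       0 < p.1 + p.2.1 + p.2.2.1 ∧ 0 < p.2.2.2 ∧
       p.1 + p.2.1 + p.2.2.1 + p.2.2.2 = 1}

/-!
Write `A = x₁ + x₃`, `B = x₂ + x₃` and `α = x₁ + x₂ + x₃`. One step of the operator sends
`A ↦ η A / α` and `B ↦ B / (2α)`, so the ratio `B / A` is divided by exactly `2η > 1` at every
step and tends to `0`. Since `A ≤ 1`, this forces `B → 0`, i.e. `x₂, x₃ → 0`; and since
`α = A + x₂`, the next value of `A` is `η / (1 + x₂ / A)` with `0 ≤ x₂ / A ≤ B / A → 0`,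
so `A → η`.
If `x₁ = x₃ = 0`, one step already lands on the fixed point `(0, 1/2, 0, 1/2)`.
-/

open Filter Topology

noncomputable def wolbRatio (p : ℝ × ℝ × ℝ × ℝ) : ℝ :=
  (p.2.1 + p.2.2.1) / (p.1 + p.2.2.1)

section

variable {η : ℝ}

lemma nWolbOp_fst_add_thd (p : ℝ × ℝ × ℝ × ℝ) (hα : p.1 + p.2.1 + p.2.2.1 ≠ 0) :
    (nWolbOp η p).1 + (nWolbOp η p).2.2.1 = η * (p.1 + p.2.2.1) / (p.1 + p.2.1 + p.2.2.1) := by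
  simp only [nWolbOp]
  field_simp
  ring

lemma nWolbOp_snd_add_thd (p : ℝ × ℝ × ℝ × ℝ) (hα : p.1 + p.2.1 + p.2.2.1 ≠ 0) :
    (nWolbOp η p).2.1 + (nWolbOp η p).2.2.1
      = (p.2.1 + p.2.2.1) / (2 * (p.1 + p.2.1 + p.2.2.1)) := by
  simp only [nWolbOp]
  field_simp
  ring

lemma mapsTo_nWolbOp_S31 (h0 : 0 < η) (h1 : η < 1) : Set.MapsTo (nWolbOp η) S31 S31 := by
  rintro ⟨a, b, c, d⟩ ⟨ha, hb, hc, hd, hα, hu, hsum⟩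
  simp only [S31, Set.mem_ofPred_eq, nWolbOp] at *
  have hα' : 0 < 2 * (a + b + c) := by linarith
  refine ⟨by positivity, by positivity, by positivity, ?_, ?_, ?_, ?_⟩
  · exact div_nonneg (by nlinarith) hα'.le
  · rw [← add_div, ← add_div]
    exact div_pos (by nlinarith) hα'
  · exact div_pos (by nlinarith) hα'
  · field_simp
    ring

lemma iterate_nWolbOp_mem_S31 (h0 : 0 < η) (h1 : η < 1) {s : ℝ × ℝ × ℝ × ℝ} (hs : s ∈ S31)
    (k : ℕ) : (nWolbOp η)^[k] s ∈ S31 :=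
  (mapsTo_nWolbOp_S31 h0 h1).iterate k hs

lemma fst_add_thd_iterate_nWolbOp_pos (h0 : 0 < η) (h1 : η < 1) {s : ℝ × ℝ × ℝ × ℝ}
    (hs : s ∈ S31) (hA : 0 < s.1 + s.2.2.1) (k : ℕ) :
    0 < ((nWolbOp η)^[k] s).1 + ((nWolbOp η)^[k] s).2.2.1 := by
  induction k with
  | zero => exact hA
  | succ k ih =>
    have hα := (iterate_nWolbOp_mem_S31 h0 h1 hs k).2.2.2.2.1
    rw [Function.iterate_succ_apply', nWolbOp_fst_add_thd _ hα.ne']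
    positivity

lemma wolbRatio_nWolbOp (hη : η ≠ 0) {p : ℝ × ℝ × ℝ × ℝ} (hα : p.1 + p.2.1 + p.2.2.1 ≠ 0)
    (hA : p.1 + p.2.2.1 ≠ 0) : wolbRatio (nWolbOp η p) = wolbRatio p / (2 * η) := by
  rw [wolbRatio, wolbRatio, nWolbOp_fst_add_thd p hα, nWolbOp_snd_add_thd p hα]
  field_simp

lemma wolbRatio_iterate_nWolbOp (h0 : 0 < η) (h1 : η < 1) {s : ℝ × ℝ × ℝ × ℝ}
    (hs : s ∈ S31) (hA : 0 < s.1 + s.2.2.1) (k : ℕ) :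
    wolbRatio ((nWolbOp η)^[k] s) = wolbRatio s * ((2 * η)⁻¹) ^ k := by
  induction k with
  | zero => simp
  | succ k ih =>
    rw [Function.iterate_succ_apply', wolbRatio_nWolbOp h0.ne'
      (iterate_nWolbOp_mem_S31 h0 h1 hs k).2.2.2.2.1.ne'
      (fst_add_thd_iterate_nWolbOp_pos h0 h1 hs hA k).ne', ih, pow_succ]
    ring

lemma tendsto_wolbRatio_iterate_nWolbOp (h1 : 1 / 2 < η) (h2 : η < 1) {s : ℝ × ℝ × ℝ × ℝ}
    (hs : s ∈ S31) (hA : 0 < s.1 + s.2.2.1) :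
    Tendsto (fun k => wolbRatio ((nWolbOp η)^[k] s)) atTop (𝓝 0) := by
  have h0 : 0 < η := by linarith
  have hr : (2 * η)⁻¹ < 1 := inv_lt_one_of_one_lt₀ (by linarith)
  simp_rw [wolbRatio_iterate_nWolbOp h0 h2 hs hA]
  simpa using (tendsto_pow_atTop_nhds_zero_of_lt_one (by positivity) hr).const_mul (wolbRatio s)

lemma snd_add_thd_le_wolbRatio {p : ℝ × ℝ × ℝ × ℝ} (hp : p ∈ S31) (hA : 0 < p.1 + p.2.2.1) :
    p.2.1 + p.2.2.1 ≤ wolbRatio p := by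
  obtain ⟨ha, hb, hc, hd, -, -, hsum⟩ := hp
  rw [wolbRatio, le_div_iff₀ hA]
  nlinarith

lemma snd_div_le_wolbRatio {p : ℝ × ℝ × ℝ × ℝ} (hp : p ∈ S31) :
    p.2.1 / (p.1 + p.2.2.1) ≤ wolbRatio p :=
  div_le_div_of_nonneg_right (le_add_of_nonneg_right hp.2.2.1) (add_nonneg hp.1 hp.2.2.1)

lemma nWolbOp_fst_add_thd_eq_div_one_add {p : ℝ × ℝ × ℝ × ℝ} (hα : p.1 + p.2.1 + p.2.2.1 ≠ 0)
    (hA : p.1 + p.2.2.1 ≠ 0) :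
    (nWolbOp η p).1 + (nWolbOp η p).2.2.1 = η / (1 + p.2.1 / (p.1 + p.2.2.1)) := by
  rw [nWolbOp_fst_add_thd p hα, one_add_div hA, div_div_eq_mul_div]
  congr 1
  ring

lemma tendsto_snd_add_thd_iterate_nWolbOp (h1 : 1 / 2 < η) (h2 : η < 1)
    {s : ℝ × ℝ × ℝ × ℝ} (hs : s ∈ S31) (hA : 0 < s.1 + s.2.2.1) :
    Tendsto (fun k => ((nWolbOp η)^[k] s).2.1 + ((nWolbOp η)^[k] s).2.2.1) atTop (𝓝 0) := by
  have h0 : 0 < η := by linarith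
  refine squeeze_zero (fun k => ?_) (fun k => ?_) (tendsto_wolbRatio_iterate_nWolbOp h1 h2 hs hA)
  · have hp := iterate_nWolbOp_mem_S31 h0 h2 hs k
    exact add_nonneg hp.2.1 hp.2.2.1
  · exact snd_add_thd_le_wolbRatio (iterate_nWolbOp_mem_S31 h0 h2 hs k)
      (fst_add_thd_iterate_nWolbOp_pos h0 h2 hs hA k)

lemma tendsto_fst_add_thd_iterate_nWolbOp (h1 : 1 / 2 < η) (h2 : η < 1)
    {s : ℝ × ℝ × ℝ × ℝ} (hs : s ∈ S31) (hA : 0 < s.1 + s.2.2.1) :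
    Tendsto (fun k => ((nWolbOp η)^[k] s).1 + ((nWolbOp η)^[k] s).2.2.1) atTop (𝓝 η) := by
  have h0 : 0 < η := by linarith
  set p := fun k => (nWolbOp η)^[k] s
  have hmem k : p k ∈ S31 := iterate_nWolbOp_mem_S31 h0 h2 hs k
  have hq : Tendsto (fun k => (p k).2.1 / ((p k).1 + (p k).2.2.1)) atTop (𝓝 0) :=
    squeeze_zero (fun k => div_nonneg (hmem k).2.1 (add_nonneg (hmem k).1 (hmem k).2.2.1))
      (fun k => snd_div_le_wolbRatio (hmem k)) (tendsto_wolbRatio_iterate_nWolbOp h1 h2 hs hA)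
  have hstep k : (p (k + 1)).1 + (p (k + 1)).2.2.1
      = η / (1 + (p k).2.1 / ((p k).1 + (p k).2.2.1)) := by
    simp only [p, Function.iterate_succ_apply']
    exact nWolbOp_fst_add_thd_eq_div_one_add (hmem k).2.2.2.2.1.ne'
      (fst_add_thd_iterate_nWolbOp_pos h0 h2 hs hA k).ne'
  rw [← tendsto_add_atTop_iff_nat 1, tendsto_congr hstep]
  have hden : Tendsto (fun k => 1 + (p k).2.1 / ((p k).1 + (p k).2.2.1)) atTop (𝓝 1) := by
    simpa using hq.const_add 1
  simpa [div_eq_mul_inv] using (hden.inv₀ one_ne_zero).const_mul η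

lemma tendsto_iterate_nWolbOp_of_fst_add_thd_pos (h1 : 1 / 2 < η) (h2 : η < 1)
    {s : ℝ × ℝ × ℝ × ℝ} (hs : s ∈ S31) (hA : 0 < s.1 + s.2.2.1) :
    Tendsto (fun k => (nWolbOp η)^[k] s) atTop (𝓝 (η, 0, 0, 1 - η)) := by
  set p := fun k => (nWolbOp η)^[k] s
  have hmem k : p k ∈ S31 := iterate_nWolbOp_mem_S31 (by linarith) h2 hs k
  have hB := tendsto_snd_add_thd_iterate_nWolbOp h1 h2 hs hA
  have hx₂ : Tendsto (fun k => (p k).2.1) atTop (𝓝 0) :=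
    squeeze_zero (fun k => (hmem k).2.1) (fun k => le_add_of_nonneg_right (hmem k).2.2.1) hB
  have hx₃ : Tendsto (fun k => (p k).2.2.1) atTop (𝓝 0) :=
    squeeze_zero (fun k => (hmem k).2.2.1) (fun k => le_add_of_nonneg_left (hmem k).2.1) hB
  have hx₁ : Tendsto (fun k => (p k).1) atTop (𝓝 η) := by
    simpa [p] using (tendsto_fst_add_thd_iterate_nWolbOp h1 h2 hs hA).sub hx₃
  have hu : Tendsto (fun k => (p k).2.2.2) atTop (𝓝 (1 - η)) := by
    have hsum k : 1 - ((p k).1 + (p k).2.1 + (p k).2.2.1) = (p k).2.2.2 := by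
      linarith [(hmem k).2.2.2.2.2.2]
    rw [← tendsto_congr hsum]
    simpa using tendsto_const_nhds.sub ((hx₁.add hx₂).add hx₃)
  exact hx₁.prodMk_nhds (hx₂.prodMk_nhds (hx₃.prodMk_nhds hu))

lemma nWolbOp_eq_of_fst_eq_zero_of_thd_eq_zero {p : ℝ × ℝ × ℝ × ℝ} (h₁ : p.1 = 0)
    (h₃ : p.2.2.1 = 0) (h₂ : p.2.1 ≠ 0) : nWolbOp η p = (0, 1 / 2, 0, 1 / 2) := by
  simp only [nWolbOp, h₁, h₃, Prod.mk.injEq]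
  field_simp
  norm_num [h₂]

lemma tendsto_iterate_nWolbOp_of_fst_eq_zero_of_thd_eq_zero {s : ℝ × ℝ × ℝ × ℝ} (hs : s ∈ S31)
    (h₁ : s.1 = 0) (h₃ : s.2.2.1 = 0) :
    Tendsto (fun k => (nWolbOp η)^[k] s) atTop (𝓝 (0, 1 / 2, 0, 1 / 2)) := by
  have h₂ : s.2.1 ≠ 0 := by
    have hα := hs.2.2.2.2.1
    rw [h₁, h₃] at hα
    linarith
  have hfix k : (nWolbOp η)^[k + 1] s = (0, 1 / 2, 0, 1 / 2) := by
    induction k with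
    | zero => exact nWolbOp_eq_of_fst_eq_zero_of_thd_eq_zero h₁ h₃ h₂
    | succ k ih =>
      rw [Function.iterate_succ_apply', ih]
      exact nWolbOp_eq_of_fst_eq_zero_of_thd_eq_zero rfl rfl (by norm_num)
  rw [← tendsto_add_atTop_iff_nat 1]
  simp only [hfix]
  exact tendsto_const_nhds

end

theorem nWolbOp_limit (η : ℝ) (h1 : 1 / 2 < η) (h2 : η < 1)
    (s : ℝ × ℝ × ℝ × ℝ) (hs : s ∈ S31) :
    (s.1 = 0 ∧ s.2.2.1 = 0 →
      Filter.Tendsto (fun k => (nWolbOp η)^[k] s) Filter.atTop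
        (nhds ((0 : ℝ), (1 : ℝ) / 2, (0 : ℝ), (1 : ℝ) / 2))) ∧
    (¬(s.1 = 0 ∧ s.2.2.1 = 0) →
      Filter.Tendsto (fun k => (nWolbOp η)^[k] s) Filter.atTop
        (nhds (η, (0 : ℝ), (0 : ℝ), 1 - η))) := by
  refine ⟨fun ⟨h₁, h₃⟩ => tendsto_iterate_nWolbOp_of_fst_eq_zero_of_thd_eq_zero hs h₁ h₃,
    fun hne => tendsto_iterate_nWolbOp_of_fst_add_thd_pos h1 h2 hs ?_⟩
  obtain ⟨hx₁, -, hx₃, -⟩ := hs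
  by_contra! hA
  exact hne ⟨by linarith, by linarith⟩
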